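/- For every k ≥ 1, the diameter of the k-th Apollonian network satisfies diam(G_k) = ⌈(2k - 1)/3⌉. -/

import Mathlib

/-- A family of Apollonian networks, given by a vertex set `Vert` together with a
generation labeling `gen` and an adjacency relation `adj`, satisfying the recursive
construction: the first generation `U₁` consists of three pairwise adjacent vertices
(forming `G₁`); and for each `k ≥ 1`, for each vertex `u` of generation `k` and each
adjacent pair `{x, y}` of neighbors of `u` in `G_k`, exactly one new vertex of
generation `k + 1` is created, adjacent to exactly `u`, `x`, and `y`.
The `k`-th Apollonian network `G_k` is the induced subgraph on the vertices of
generation at most `k`. -/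
structure ApollonianNetwork where
  Vert : Type
  adj : Vert → Vert → Prop
  adj_symm : ∀ a b, adj a b → adj b a
  adj_irrefl : ∀ a, ¬ adj a a
  gen : Vert → ℕ
  gen_pos : ∀ v, 1 ≤ gen v
  /-- The first generation consists of exactly three vertices. -/
  U1_card : ∃ a b c : Vert, a ≠ b ∧ a ≠ c ∧ b ≠ c ∧ {v | gen v = 1} = {a, b, c}
  /-- `G₁` is a complete graph on the first generation. -/
  U1_complete : ∀ a b, gen a = 1 → gen b = 1 → a ≠ b → adj a b
  /-- All edges join vertices of distinct generations, except within generation 1. -/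
  adj_gen : ∀ a b, adj a b → gen a = gen b → gen a = 1
  /-- Every vertex `v` of generation `k ≥ 2` is adjacent, among the vertices of earlier
  generations, to exactly three vertices `u`, `x`, `y`, where `u` has generation `k - 1`
  and `x`, `y` are neighbors of `u` in `G_{k-1}` that are adjacent to each other. -/
  created : ∀ v, 2 ≤ gen v → ∃ u x y,
    gen u = gen v - 1 ∧ gen x ≤ gen v - 1 ∧ gen y ≤ gen v - 1 ∧
    adj u x ∧ adj u y ∧ adj x y ∧
    {w | adj v w ∧ gen w < gen v} = {u, x, y}
  /-- For each `k ≥ 1`, each vertex `u` of generation `k`, and each adjacent pair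
  `{x, y}` of neighbors of `u` in `G_k`, there is exactly one vertex of generation
  `k + 1` whose neighbors in `G_{k+1}` are exactly `u`, `x`, and `y`. -/
  attach : ∀ k, 1 ≤ k → ∀ u x y,
    gen u = k → gen x ≤ k → gen y ≤ k → x ≠ y →
    adj u x → adj u y → adj x y →
    ∃! v, gen v = k + 1 ∧ {w | adj v w ∧ gen w ≤ k} = ({u, x, y} : Set Vert)

/-- The `k`-th Apollonian network `G_k`: the induced subgraph on the vertices of
generation at most `k`. -/
def ApollonianNetwork.G (A : ApollonianNetwork) (k : ℕ) :
    SimpleGraph {v : A.Vert // A.gen v ≤ k} where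
  Adj a b := A.adj a b
  symm := ⟨fun a b h => A.adj_symm a b h⟩
  loopless := ⟨fun a h => A.adj_irrefl a h⟩

/-!
Every vertex of generation `g ≥ 2` has a neighbour of generation at most `max 1 (g - 3)`,
because its three lower neighbours form a triangle and adjacent vertices of generation `≥ 2`
have distinct generations. Hence every vertex of `G (k + 3)` is within distance one of `G k`,
and `diam G (k + 3) ≤ diam G k + 2`.

For the lower bound, the vertices strictly inside a face (triangle) `F` are separated from the
rest of the network by the three vertices of `F`, so a walk from the inside of `F` to the inside
of a disjoint face `F'` is at least two steps longer than the distance between `F` and `F'`.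
Stacking three times into a face yields a face inside it three generations later, so two such
faces at distance `δ` in `G m` give two at distance `δ + 2` in `G (m + 3)`. Starting from
suitable pairs in `G 2` and `G 3`, the vertices stacked into the final pair of faces are at
distance `⌊(2k + 1)/3⌋ = ⌈(2k - 1)/3⌉` in `G k`.
-/

namespace SimpleGraph

variable {V W : Type*} {G : SimpleGraph V} {G' : SimpleGraph W} {u v : V}

lemma Hom.edist_le (f : G →g G') (u v : V) : G'.edist (f u) (f v) ≤ G.edist u v := by
  rcases eq_or_ne (G.edist u v) ⊤ with h | h
  · simp [h]
  obtain ⟨p, hp⟩ := exists_walk_of_edist_ne_top h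
  rw [← hp, ← Walk.length_map f]
  exact SimpleGraph.edist_le _

lemma le_edist {n : ℕ∞} (h : ∀ p : G.Walk u v, n ≤ p.length) : n ≤ G.edist u v :=
  le_sInf (Set.forall_mem_range.2 h)

end SimpleGraph

namespace ApollonianNetwork

open SimpleGraph

variable {A : ApollonianNetwork} {a b s u v w x y z : A.Vert} {k : ℕ}

variable (A) in
def graph : SimpleGraph A.Vert where
  Adj := A.adj
  symm := ⟨fun a b h => A.adj_symm a b h⟩
  loopless := ⟨fun a h => A.adj_irrefl a h⟩

variable (A) in
def toGraph (k : ℕ) : A.G k →g A.graph where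
  toFun := Subtype.val
  map_rel' h := h

variable (A) in
def inclusion {k l : ℕ} (h : k ≤ l) : A.G k →g A.G l where
  toFun v := ⟨v.1, v.2.trans h⟩
  map_rel' h := h

variable (A) in
def low (v : A.Vert) : Set A.Vert := {w | A.adj v w ∧ A.gen w < A.gen v}

variable (A) in
/-- The faces into which later vertices are stacked: triangles whose apex `u` has maximal
generation. -/
def IsFace (u x y : A.Vert) : Prop :=
  A.adj u x ∧ A.adj u y ∧ A.adj x y ∧ A.gen x ≤ A.gen u ∧ A.gen y ≤ A.gen u

lemma ne_of_adj (h : A.adj a b) : a ≠ b := by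
  rintro rfl
  exact A.adj_irrefl a h

lemma gen_ne_of_adj (h : A.adj a b) (ha : 2 ≤ A.gen a) : A.gen a ≠ A.gen b := fun e => by
  have := A.adj_gen a b h e
  omega

lemma low_eq_of_gen_eq_succ (hv : A.gen v = k + 1) :
    A.low v = {w | A.adj v w ∧ A.gen w ≤ k} := by
  ext w
  simp only [low, Set.mem_ofPred_eq, hv, Nat.lt_succ_iff]

lemma IsFace.gen_le (h : A.IsFace u x y) (hs : s ∈ ({u, x, y} : Set A.Vert)) :
    A.gen s ≤ A.gen u := by
  rcases hs with rfl | rfl | rfl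
  exacts [le_rfl, h.2.2.2.1, h.2.2.2.2]

lemma IsFace.left_mem_low (h : A.IsFace u x y) (hu : 2 ≤ A.gen u) : x ∈ A.low u :=
  ⟨h.1, h.2.2.2.1.lt_of_ne (A.gen_ne_of_adj h.1 hu).symm⟩

lemma IsFace.right_mem_low (h : A.IsFace u x y) (hu : 2 ≤ A.gen u) : y ∈ A.low u :=
  ⟨h.2.1, h.2.2.2.2.lt_of_ne (A.gen_ne_of_adj h.2.1 hu).symm⟩

lemma isFace_of_mem_low (ha : a ∈ A.low v) (hb : b ∈ A.low v) (hab : A.adj a b) :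
    A.IsFace v a b :=
  ⟨ha.1, hb.1, hab, ha.2.le, hb.2.le⟩

lemma IsFace.exists_low_eq (h : A.IsFace u x y) :
    ∃ v, A.gen v = A.gen u + 1 ∧ A.low v = {u, x, y} := by
  obtain ⟨hux, huy, hxy, hx, hy⟩ := h
  obtain ⟨v, ⟨hv, hlow⟩, -⟩ :=
    A.attach (A.gen u) (A.gen_pos u) u x y rfl hx hy (ne_of_adj hxy) hux huy hxy
  exact ⟨v, hv, (low_eq_of_gen_eq_succ hv).trans hlow⟩

lemma exists_isFace_low_eq (hv : 2 ≤ A.gen v) :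
    ∃ u x y, A.IsFace u x y ∧ A.gen u + 1 = A.gen v ∧ A.low v = {u, x, y} := by
  obtain ⟨u, x, y, hu, hx, hy, hux, huy, hxy, hlow⟩ := A.created v hv
  exact ⟨u, x, y, ⟨hux, huy, hxy, by omega, by omega⟩, by omega, hlow⟩


lemma exists_gen_one : ∃ a b c, A.IsFace a b c ∧ A.gen a = 1 ∧ A.gen b = 1 ∧ A.gen c = 1 ∧
    {v | A.gen v = 1} = {a, b, c} := by
  obtain ⟨a, b, c, hab, hac, hbc, hU⟩ := A.U1_card
  have hgen : ∀ v ∈ ({a, b, c} : Set A.Vert), A.gen v = 1 := fun v hv => by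
    rw [← hU] at hv
    exact hv
  have ha := hgen a (by simp)
  have hb := hgen b (by simp)
  have hc := hgen c (by simp)
  exact ⟨a, b, c, ⟨A.U1_complete a b ha hb hab, A.U1_complete a c ha hc hac,
    A.U1_complete b c hb hc hbc, by omega, by omega⟩, ha, hb, hc, hU⟩

lemma low_eq_of_gen_eq_two (hv : A.gen v = 2) : A.low v = {w | A.gen w = 1} := by
  obtain ⟨a, b, c, ⟨hab, hac, hbc, -⟩, -, -, -, hU⟩ := A.exists_gen_one
  obtain ⟨u, x, y, ⟨hux, huy, hxy, hx, hy⟩, hu, hlow⟩ :=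
    A.exists_isFace_low_eq (v := v) (by omega)
  have hsub : ({u, x, y} : Set A.Vert) ⊆ {w | A.gen w = 1} := by
    rintro w (rfl | rfl | rfl) <;> simp only [Set.mem_ofPred_eq] <;>
      linarith [A.gen_pos w]
  rw [hlow, hU]
  refine Set.eq_of_subset_of_ncard_le (hU ▸ hsub) ?_ (Set.toFinite _)
  rw [Set.ncard_eq_three.2 ⟨a, b, c, ne_of_adj hab, ne_of_adj hac, ne_of_adj hbc, rfl⟩,
    Set.ncard_eq_three.2 ⟨u, x, y, ne_of_adj hux, ne_of_adj huy, ne_of_adj hxy, rfl⟩]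

lemma eq_of_gen_eq_two (hv : A.gen v = 2) (hw : A.gen w = 2) : v = w := by
  obtain ⟨a, b, c, ⟨hab, hac, hbc, -⟩, ha, hb, hc, hU⟩ := A.exists_gen_one
  obtain ⟨t, -, ht⟩ := A.attach 1 le_rfl a b c ha hb.le hc.le (ne_of_adj hbc) hab hac hbc
  have key : ∀ v, A.gen v = 2 → v = t := fun v hv =>
    ht v ⟨hv, (low_eq_of_gen_eq_succ hv).symm.trans ((low_eq_of_gen_eq_two hv).trans hU)⟩
  exact (key v hv).trans (key w hw).symm

lemma adj_of_gen_le_two (hv : A.gen v ≤ 2) (hw : A.gen w ≤ 2) (hvw : v ≠ w) : A.adj v w := by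
  have hv1 := A.gen_pos v
  have hw1 := A.gen_pos w
  rcases (by omega : A.gen v = 1 ∨ A.gen v = 2) with hv | hv <;>
    rcases (by omega : A.gen w = 1 ∨ A.gen w = 2) with hw | hw
  · exact A.U1_complete v w hv hw hvw
  · exact A.adj_symm _ _ (((low_eq_of_gen_eq_two hw).symm ▸ hv : v ∈ A.low w)).1
  · exact (((low_eq_of_gen_eq_two hv).symm ▸ hw : w ∈ A.low v)).1
  · exact absurd (eq_of_gen_eq_two hv hw) hvw

lemma exists_gen_eq_two : ∃ d, A.gen d = 2 := by
  obtain ⟨a, b, c, hF, ha, -⟩ := A.exists_gen_one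
  obtain ⟨d, hd, -⟩ := hF.exists_low_eq
  exact ⟨d, by omega⟩

lemma exists_adj_gen_le (hv : 2 ≤ A.gen v) :
    ∃ w, A.adj v w ∧ A.gen w ≤ max 1 (A.gen v - 3) := by
  obtain ⟨u, x, y, hF, hu, hlow⟩ := A.exists_isFace_low_eq hv
  have hadj : ∀ w ∈ ({u, x, y} : Set A.Vert), A.adj v w :=
    fun w hw => (hlow ▸ hw : w ∈ A.low v).1
  rcases le_or_gt (A.gen u) 1 with hu1 | hu2
  · exact ⟨u, hadj u (by simp), by omega⟩
  have hx := hF.left_mem_low hu2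
  have hy := hF.right_mem_low hu2
  by_cases hxle : A.gen x ≤ max 1 (A.gen v - 3)
  · exact ⟨x, hadj x (by simp), hxle⟩
  · have := A.gen_ne_of_adj hF.2.2.1 (by omega)
    exact ⟨y, hadj y (by simp), by simp only [low, Set.mem_ofPred_eq] at hx hy; omega⟩

lemma ediam_G_le_one (hk : k ≤ 2) : (A.G k).ediam ≤ 1 :=
  ediam_le_of_edist_le fun v w => edist_le_one_iff_adj_or_eq.2 <| or_iff_not_imp_right.2
    fun h => A.adj_of_gen_le_two (v.2.trans hk) (w.2.trans hk) fun e => h (Subtype.ext e)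

lemma ediam_G_three_le : (A.G 3).ediam ≤ 2 := by
  obtain ⟨d, hd⟩ := A.exists_gen_eq_two
  have hnear : ∀ z : {v // A.gen v ≤ 3}, (A.G 3).edist ⟨d, by omega⟩ z ≤ 1 := by
    rintro ⟨z, hz⟩
    refine edist_le_one_iff_adj_or_eq.2 ?_
    rcases (by have := A.gen_pos z; omega : A.gen z ≤ 2 ∨ A.gen z = 3) with hz | hz
    · by_cases h : d = z
      · exact .inr (Subtype.ext h)
      · exact .inl (A.adj_of_gen_le_two hd.le hz h)
    · obtain ⟨u, x, y, -, hu, hlow⟩ := A.exists_isFace_low_eq (v := z) (by omega)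
      have hud : u = d := eq_of_gen_eq_two (by omega) hd
      exact .inl (A.adj_symm _ _ (hud ▸ (hlow ▸ by simp : u ∈ A.low z).1))
  calc (A.G 3).ediam ≤ 2 * (A.G 3).eccent ⟨d, by omega⟩ := ediam_le_two_mul_eccent _
    _ ≤ 2 * 1 := by gcongr; exact (eccent_le_iff _ _).2 hnear
    _ = 2 := mul_one 2

lemma ediam_G_add_three_le (hk : 1 ≤ k) : (A.G (k + 3)).ediam ≤ (A.G k).ediam + 2 := by
  set ι := A.inclusion (Nat.le_add_right k 3)
  have hnear : ∀ v : {v // A.gen v ≤ k + 3}, ∃ v₀, (A.G (k + 3)).edist v (ι v₀) ≤ 1 := by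
    rintro ⟨v, hv⟩
    by_cases hvk : A.gen v ≤ k
    · exact ⟨⟨v, hvk⟩, edist_le_one_iff_adj_or_eq.2 (.inr rfl)⟩
    · obtain ⟨w, hw, hgw⟩ := A.exists_adj_gen_le (v := v) (by omega)
      exact ⟨⟨w, by omega⟩, edist_le_one_iff_adj_or_eq.2 (.inl hw)⟩
  refine ediam_le_of_edist_le fun v w => ?_
  obtain ⟨v₀, hv⟩ := hnear v
  obtain ⟨w₀, hw⟩ := hnear w
  calc (A.G (k + 3)).edist v w
      ≤ (A.G (k + 3)).edist v (ι w₀) + (A.G (k + 3)).edist (ι w₀) w :=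
        SimpleGraph.edist_triangle
    _ ≤ (A.G (k + 3)).edist v (ι v₀) + (A.G (k + 3)).edist (ι v₀) (ι w₀) +
          (A.G (k + 3)).edist (ι w₀) w := by gcongr; exact SimpleGraph.edist_triangle
    _ ≤ 1 + (A.G k).ediam + 1 := by
        gcongr
        · exact (ι.edist_le v₀ w₀).trans edist_le_ediam
        · rwa [SimpleGraph.edist_comm]
    _ = (A.G k).ediam + 2 := by ring

lemma ediam_G_le : ∀ k, 1 ≤ k → (A.G k).ediam ≤ ((2 * k + 1) / 3 : ℕ)
  | 0, h => absurd h (by norm_num)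
  | 1, _ => A.ediam_G_le_one (by norm_num)
  | 2, _ => A.ediam_G_le_one le_rfl
  | 3, _ => A.ediam_G_three_le
  | k + 4, _ => calc
      (A.G (k + 1 + 3)).ediam ≤ (A.G (k + 1)).ediam + 2 := A.ediam_G_add_three_le (by omega)
      _ ≤ ((2 * (k + 1) + 1) / 3 : ℕ) + 2 := by gcongr; exact ediam_G_le (k + 1) (by omega)
      _ = ((2 * (k + 4) + 1) / 3 : ℕ) := by norm_cast; omega


variable (A) in
/-- `z` lies strictly inside the triangle `F` of the planar embedding. -/
inductive Inside (F : Set A.Vert) : A.Vert → Prop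
  | base {z : A.Vert} : A.low z = F → Inside F z
  | step {z w : A.Vert} : w ∈ A.low z → Inside F w →
      (∀ w' ∈ A.low z, w' ∉ F → Inside F w') → Inside F z

namespace Inside

variable {F F' : Set A.Vert}

lemma of_low (hw : w ∈ A.low z) (hwF : A.Inside F w)
    (hlow : ∀ w' ∈ A.low z, w' ∈ F ∨ A.Inside F w') : A.Inside F z :=
  .step hw hwF fun w' hw' hF => (hlow w' hw').resolve_left hF

lemma gen_lt (h : A.Inside F z) (hs : s ∈ F) : A.gen s < A.gen z := by
  induction h with
  | base h => exact (h ▸ hs : s ∈ A.low _).2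
  | step hw _ _ ih => exact ih.trans hw.2

lemma two_le (h : A.Inside F z) (hF : F.Nonempty) : 2 ≤ A.gen z :=
  hF.elim fun s hs => (A.gen_pos s).trans_lt (h.gen_lt hs)

lemma mem_or_inside (h : A.Inside F z) (hw : w ∈ A.low z) : w ∈ F ∨ A.Inside F w := by
  cases h with
  | base h => exact .inl (h ▸ hw)
  | step _ _ hlow => exact or_iff_not_imp_left.2 (hlow w hw)

lemma of_adj_of_gen_lt (hF : F.Nonempty) (hz : A.Inside F z) (hadj : A.adj v z)
    (hlt : A.gen z < A.gen v) : A.Inside F v := by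
  induction hn : A.gen v using Nat.strong_induction_on generalizing v z with
  | _ n ih =>
  have hz2 := hz.two_le hF
  obtain ⟨u, x, y, hface, hu, hlow⟩ := A.exists_isFace_low_eq (v := v) (by omega)
  have hz_mem : z ∈ ({u, x, y} : Set A.Vert) := hlow ▸ ⟨hadj, hlt⟩
  have hu2 : 2 ≤ A.gen u := hz2.trans (hface.gen_le hz_mem)
  have hx := hface.left_mem_low hu2
  have hy := hface.right_mem_low hu2
  have hu_in : A.Inside F u := by
    rcases hz_mem with rfl | rfl | rfl
    · exact hz
    · exact ih (A.gen u) (by omega) hz hx.1 hx.2 rfl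
    · exact ih (A.gen u) (by omega) hz hy.1 hy.2 rfl
  refine .of_low (hlow ▸ by simp : u ∈ A.low v) hu_in ?_
  rw [hlow]
  rintro w (rfl | rfl | rfl)
  exacts [.inr hu_in, hu_in.mem_or_inside hx, hu_in.mem_or_inside hy]

lemma of_adj (hF : F.Nonempty) (hz : A.Inside F z) (hadj : A.adj z w) (hw : w ∉ F) :
    A.Inside F w := by
  rcases lt_trichotomy (A.gen w) (A.gen z) with h | h | h
  · exact (hz.mem_or_inside ⟨hadj, h⟩).resolve_left hw
  · exact absurd (A.adj_gen z w hadj h.symm) (by have := hz.two_le hF; omega)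
  · exact hz.of_adj_of_gen_lt hF (A.adj_symm _ _ hadj) h

lemma exists_walk_length_lt (hF : F.Nonempty) (hv : A.Inside F v) (hw : ¬ A.Inside F w)
    (W : A.graph.Walk v w) : ∃ s ∈ F, ∃ W' : A.graph.Walk s w, W'.length < W.length := by
  induction W with
  | nil => exact absurd hv hw
  | @cons v v' w hadj p ih =>
    by_cases hs : v' ∈ F
    · exact ⟨v', hs, p, by simp⟩
    · obtain ⟨s, hs, W', hW'⟩ := ih (hv.of_adj hF hadj hs) hw
      exact ⟨s, hs, W', by simp only [Walk.length_cons]; omega⟩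

lemma mono (hsub : ∀ f ∈ F', A.Inside F f) (hF' : F'.Nonempty) (h : A.Inside F' z) :
    A.Inside F z := by
  induction h with
  | base h =>
    obtain ⟨f, hf⟩ := hF'
    exact .step (h ▸ hf) (hsub f hf) fun w hw _ => hsub w (h ▸ hw)
  | step hw _ _ ih ihlow =>
    exact .step hw ih fun w' hw' _ => (em (w' ∈ F')).elim (hsub w') (ihlow w' hw')

lemma not_inside (hne : F ≠ F') (hFF' : ∀ s ∈ F, ¬ A.Inside F' s)
    (hF'F : ∀ s ∈ F', ¬ A.Inside F s) (hz : A.Inside F z) : ¬ A.Inside F' z := by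
  induction hz with
  | base h =>
    intro hz'
    cases hz' with
    | base h' => exact hne (h.symm.trans h')
    | step hw hwF' _ => exact hFF' _ (h ▸ hw) hwF'
  | step hw hwF _ ih =>
    intro hz'
    rcases hz'.mem_or_inside hw with h | h
    · exact hF'F _ h hwF
    · exact ih h

end Inside

lemma not_inside_of_gen_le (hs : A.gen s ≤ A.gen u) : ¬ A.Inside {u, x, y} s :=
  fun h => (h.gen_lt (by simp : u ∈ ({u, x, y} : Set A.Vert))).not_ge hs

lemma add_two_le_length {F F' : Set A.Vert} {δ : ℕ} (hF : F.Nonempty) (hF' : F'.Nonempty)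
    (hdisj : ∀ z, A.Inside F z → ¬ A.Inside F' z) (hFF' : ∀ s ∈ F, ¬ A.Inside F' s)
    (hδ : ∀ s ∈ F, ∀ t ∈ F', ∀ W : A.graph.Walk s t, δ ≤ W.length)
    (hv : A.Inside F v) (hw : A.Inside F' w) (W : A.graph.Walk v w) : δ + 2 ≤ W.length := by
  obtain ⟨s, hs, W₁, h₁⟩ := hv.exists_walk_length_lt hF (fun h => hdisj w h hw) W
  obtain ⟨t, ht, W₂, h₂⟩ := hw.exists_walk_length_lt hF' (hFF' s hs) W₁.reverse
  have := hδ s hs t ht W₂.reverse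
  rw [Walk.length_reverse] at this h₂
  omega

/-- Stack `c₁` into `u x y`, `c₂` into `c₁ u x` and `c₃` into `c₂ c₁ u`. -/
lemma IsFace.exists_isFace_inside (h : A.IsFace u x y) : ∃ u' x' y', A.IsFace u' x' y' ∧
    A.gen u' = A.gen u + 3 ∧ ∀ f ∈ ({u', x', y'} : Set A.Vert), A.Inside {u, x, y} f := by
  obtain ⟨c₁, hg₁, hl₁⟩ := h.exists_low_eq
  have h₁ : A.Inside {u, x, y} c₁ := .base hl₁
  have hu₁ : u ∈ A.low c₁ := hl₁ ▸ by simp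
  have hx₁ : x ∈ A.low c₁ := hl₁ ▸ by simp
  obtain ⟨c₂, hg₂, hl₂⟩ := (isFace_of_mem_low hu₁ hx₁ h.1).exists_low_eq
  have h₂ : A.Inside {u, x, y} c₂ :=
    .of_low (hl₂ ▸ by simp) h₁ (by rw [hl₂]; rintro w (rfl | rfl | rfl) <;> simp [h₁])
  have h₁₂ : c₁ ∈ A.low c₂ := hl₂ ▸ by simp
  have hu₂ : u ∈ A.low c₂ := hl₂ ▸ by simp
  obtain ⟨c₃, hg₃, hl₃⟩ := (isFace_of_mem_low h₁₂ hu₂ hu₁.1).exists_low_eq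
  have h₃ : A.Inside {u, x, y} c₃ :=
    .of_low (hl₃ ▸ by simp) h₂ (by rw [hl₃]; rintro w (rfl | rfl | rfl) <;> simp [h₁, h₂])
  refine ⟨c₃, c₂, c₁, isFace_of_mem_low (hl₃ ▸ by simp) (hl₃ ▸ by simp) h₁₂.1, by omega, ?_⟩
  rintro f (rfl | rfl | rfl) <;> assumption

variable (A) in
def SeparatedFaces (m δ : ℕ) : Prop :=
  ∃ u x y u' x' y', A.IsFace u x y ∧ A.IsFace u' x' y' ∧ A.gen u ≤ m ∧ A.gen u' ≤ m ∧
    (∀ z, A.Inside {u, x, y} z → ¬ A.Inside {u', x', y'} z) ∧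
    (∀ s ∈ ({u, x, y} : Set A.Vert), ¬ A.Inside {u', x', y'} s) ∧
    ∀ s ∈ ({u, x, y} : Set A.Vert), ∀ t ∈ ({u', x', y'} : Set A.Vert),
      ∀ W : A.graph.Walk s t, δ ≤ W.length

lemma SeparatedFaces.mono {m m' δ : ℕ} (h : A.SeparatedFaces m δ) (hm : m ≤ m') :
    A.SeparatedFaces m' δ := by
  obtain ⟨u, x, y, u', x', y', hF, hF', hu, hu', rest⟩ := h
  exact ⟨u, x, y, u', x', y', hF, hF', hu.trans hm, hu'.trans hm, rest⟩

lemma SeparatedFaces.step {m δ : ℕ} (h : A.SeparatedFaces m δ) :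
    A.SeparatedFaces (m + 3) (δ + 2) := by
  obtain ⟨u, x, y, u', x', y', hF, hF', hu, hu', hdisj, hFF', hδ⟩ := h
  obtain ⟨a, b, c, hG, hga, hsub⟩ := hF.exists_isFace_inside
  obtain ⟨a', b', c', hG', hga', hsub'⟩ := hF'.exists_isFace_inside
  have hmono : ∀ z, A.Inside {a, b, c} z → A.Inside {u, x, y} z :=
    fun z => Inside.mono hsub ⟨a, by simp⟩
  have hmono' : ∀ z, A.Inside {a', b', c'} z → A.Inside {u', x', y'} z :=
    fun z => Inside.mono hsub' ⟨a', by simp⟩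
  refine ⟨a, b, c, a', b', c', hG, hG', by omega, by omega,
    fun z hz hz' => hdisj z (hmono z hz) (hmono' z hz'),
    fun s hs hs' => hdisj s (hsub s hs) (hmono' s hs'), fun s hs t ht W => ?_⟩
  exact add_two_le_length ⟨u, by simp⟩ ⟨u', by simp⟩ hdisj hFF' hδ (hsub s hs) (hsub' t ht) W

lemma IsFace.separated_of_gen_eq {u' x' y' : A.Vert} (hF : A.IsFace u x y)
    (hF' : A.IsFace u' x' y') (hgen : A.gen u = A.gen u')
    (hne : ({u, x, y} : Set A.Vert) ≠ {u', x', y'}) :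
    (∀ z, A.Inside {u, x, y} z → ¬ A.Inside {u', x', y'} z) ∧
      ∀ s ∈ ({u, x, y} : Set A.Vert), ¬ A.Inside {u', x', y'} s := by
  have hFF' : ∀ s ∈ ({u, x, y} : Set A.Vert), ¬ A.Inside {u', x', y'} s :=
    fun s hs => not_inside_of_gen_le (hgen ▸ hF.gen_le hs)
  have hF'F : ∀ s ∈ ({u', x', y'} : Set A.Vert), ¬ A.Inside {u, x, y} s :=
    fun s hs => not_inside_of_gen_le (hgen.symm ▸ hF'.gen_le hs)
  exact ⟨fun z => Inside.not_inside hne hFF' hF'F, hFF'⟩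


lemma separatedFaces_two : A.SeparatedFaces 2 0 := by
  obtain ⟨a, b, c, hF, ha, -, -, -⟩ := A.exists_gen_one
  obtain ⟨d, hd, hld⟩ := hF.exists_low_eq
  have hmem : a ∈ A.low d ∧ b ∈ A.low d ∧ c ∈ A.low d := by simp [hld]
  have had : a ≠ d := by rintro rfl; omega
  have hne : ({d, a, b} : Set A.Vert) ≠ {d, b, c} := fun h => by
    have : a ∈ ({d, b, c} : Set A.Vert) := h ▸ by simp
    simp [had, ne_of_adj hF.1, ne_of_adj hF.2.1] at this
  have hF₁ := isFace_of_mem_low hmem.1 hmem.2.1 hF.1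
  have hF₂ := isFace_of_mem_low hmem.2.1 hmem.2.2 hF.2.2.1
  obtain ⟨hdisj, hFF'⟩ := hF₁.separated_of_gen_eq hF₂ rfl hne
  exact ⟨d, a, b, d, b, c, hF₁, hF₂, by omega, by omega, hdisj, hFF',
    fun _ _ _ _ _ => Nat.zero_le _⟩

lemma separatedFaces_three : A.SeparatedFaces 3 1 := by
  obtain ⟨a, b, c, hF, ha, hb, hc, -⟩ := A.exists_gen_one
  obtain ⟨d, hd, hld⟩ := hF.exists_low_eq
  have hmem : a ∈ A.low d ∧ b ∈ A.low d ∧ c ∈ A.low d := by simp [hld]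
  obtain ⟨v₁, hv₁, hlv₁⟩ := (isFace_of_mem_low hmem.1 hmem.2.1 hF.1).exists_low_eq
  obtain ⟨v₂, hv₂, hlv₂⟩ := (isFace_of_mem_low hmem.2.1 hmem.2.2 hF.2.2.1).exists_low_eq
  have hmem₁ : a ∈ A.low v₁ ∧ b ∈ A.low v₁ := by simp [hlv₁]
  have hmem₂ : d ∈ A.low v₂ ∧ c ∈ A.low v₂ := by simp [hlv₂]
  have hac := ne_of_adj hF.2.1
  have hbc := ne_of_adj hF.2.2.1
  have had : a ≠ d := by rintro rfl; omega
  have ha₂ : a ∉ ({v₂, d, c} : Set A.Vert) := by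
    rintro (rfl | rfl | rfl)
    exacts [by omega, had rfl, hac rfl]
  have hv₁₂ : v₁ ≠ v₂ := by
    rintro rfl
    have : a ∈ ({d, b, c} : Set A.Vert) := hlv₂ ▸ hmem₁.1
    simp [had, ne_of_adj hF.1, hac] at this
  have hF₁ := isFace_of_mem_low hmem₁.1 hmem₁.2 hF.1
  have hF₂ := isFace_of_mem_low hmem₂.1 hmem₂.2 hmem.2.2.1
  obtain ⟨hdisj, hFF'⟩ := hF₁.separated_of_gen_eq hF₂ (by omega)
    fun h => ha₂ (h ▸ by simp)
  refine ⟨v₁, a, b, v₂, d, c, hF₁, hF₂, by omega, by omega, hdisj, hFF', ?_⟩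
  intro s hs t ht W
  have hst : s ≠ t := by
    rintro rfl
    simp only [Set.mem_insert_iff, Set.mem_singleton_iff] at hs ht
    rcases hs with rfl | rfl | rfl <;> rcases ht with h | h | h <;> subst h <;>
      first | omega | contradiction
  exact Nat.pos_of_ne_zero fun h => hst (Walk.eq_of_length_eq_zero h)

lemma separatedFaces : ∀ n, A.SeparatedFaces (n + 2) ((2 * n + 1) / 3)
  | 0 => A.separatedFaces_two
  | 1 => A.separatedFaces_three
  | 2 => A.separatedFaces_three.mono (by norm_num)
  | n + 3 => by convert (separatedFaces n).step using 1; omega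

lemma exists_le_edist (hk : 1 ≤ k) :
    ∃ v w, (((2 * k + 1) / 3 : ℕ) : ℕ∞) ≤ (A.G k).edist v w := by
  rcases le_or_gt k 2 with hk2 | hk3
  swap
  · obtain ⟨n, rfl⟩ : ∃ n, k = n + 3 := ⟨k - 3, by omega⟩
    obtain ⟨u, x, y, u', x', y', hF, hF', hu, hu', hdisj, hFF', hδ⟩ := A.separatedFaces n
    obtain ⟨v, hv, hlv⟩ := hF.exists_low_eq
    obtain ⟨w, hw, hlw⟩ := hF'.exists_low_eq
    refine ⟨⟨v, by omega⟩, ⟨w, by omega⟩, le_edist fun p => ?_⟩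
    have := (add_two_le_length ⟨u, by simp⟩ ⟨u', by simp⟩ hdisj hFF' hδ (.base hlv)
      (.base hlw) (p.map (A.toGraph _))).trans_eq (Walk.length_map _ _)
    exact_mod_cast (by omega : (2 * (n + 3) + 1) / 3 ≤ p.length)
  · obtain ⟨a, b, c, hF, ha, hb, -⟩ := A.exists_gen_one
    refine ⟨⟨a, by omega⟩, ⟨b, by omega⟩, ?_⟩
    rw [show (2 * k + 1) / 3 = 1 by omega, Nat.cast_one, Order.one_le_iff_pos]
    exact edist_pos_of_ne fun h => ne_of_adj hF.1 (congrArg Subtype.val h)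

lemma ediam_G (hk : 1 ≤ k) : (A.G k).ediam = ((2 * k + 1) / 3 : ℕ) := by
  obtain ⟨v, w, h⟩ := A.exists_le_edist hk
  exact (A.ediam_G_le k hk).antisymm (h.trans edist_le_ediam)

end ApollonianNetwork

theorem stmt19 (A : ApollonianNetwork) (k : ℕ) (hk : 1 ≤ k) :
    ((A.G k).diam : ℤ) = ⌈(2 * (k : ℚ) - 1) / 3⌉ := by
  have hcast : (2 * (k : ℚ) - 1) / 3 = ((2 * k - 1 : ℤ) : ℚ) / ((3 : ℕ) : ℚ) := by
    push_cast; ring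
  rw [SimpleGraph.diam, A.ediam_G hk, ENat.toNat_natCast, hcast, Rat.ceil_intCast_div_natCast]
  omega
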